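/- arXiv:2305.03906 — 5 statements merged into one kernel-verified Lean document; each statement's English description precedes it below -/
import Mathlib

section
/- Let ω = (ω_n, …, ω_1, ω_0) be a general basis of the polynomials of degree ≤ n over a field F, let F, G ∈ F[x] with deg F = n, deg G = m, n > m, and assume the roots α_1, …, α_n ∈ F̄ of F are pairwise distinct. Then for every 0 ≤ k ≤ m the k-th subresultant polynomial satisfies S_k = (−1)^k a_n^{m−k} · D_ω / det W(α), where D_ω is the determinant of the (n+1)×(n+1) matrix over F̄[x] whose entry in row i (1 ≤ i ≤ n−k) and column j (1 ≤ j ≤ n) is ω_{n−k−i}(α_j) G(α_j) with last-column entry 0, and whose entry in row n−k+i (1 ≤ i ≤ k+1) and column j is ω_{k+1−i}(α_j), with last-column entry ω_{k+1−i}(x); here det W(α) ≠ 0. -/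
open Polynomial Matrix BigOperators

noncomputable section

/-- A *general basis* of the polynomials of degree ≤ `n` over `K`:
`ω i` is monic of degree `i` for every `i ≤ n`. -/
def IsGeneralBasis {K : Type*} [Field K] (n : ℕ) (ω : ℕ → Polynomial K) : Prop :=
  ∀ i ≤ n, (ω i).Monic ∧ (ω i).natDegree = i

/-- The Vandermonde-type matrix with `(i,j)` entry `α_j^{n−i}` (1-based `i`). -/
def vmat {L : Type*} [Field L] (n : ℕ) (α : Fin n → L) : Matrix (Fin n) (Fin n) L :=
  Matrix.of fun i j => α j ^ (n - 1 - (i : ℕ))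

/-- The `(n+1) × (n+1)` matrix whose determinant is the numerator `D` in the
root expression of the `k`-th subresultant polynomial (power basis):
rows `1,…,n−k` have entries `α_j^{n−k−i} G(α_j)` (last column `0`),
rows `n−k+1,…,n+1` have entries `α_j^{k+1−i}` (last column `x^{k+1−i}`). -/
def subresNum {K L : Type*} [Field K] [Field L] [Algebra K L] (n k : ℕ)
    (α : Fin n → L) (G : Polynomial K) :
    Matrix (Fin (n + 1)) (Fin (n + 1)) (Polynomial L) :=
  Matrix.of fun i j =>
    if hj : (j : ℕ) < n then
      if (i : ℕ) < n - k then
        Polynomial.C (α ⟨(j : ℕ), hj⟩ ^ (n - k - 1 - (i : ℕ)) *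
          Polynomial.aeval (α ⟨(j : ℕ), hj⟩) G)
      else Polynomial.C (α ⟨(j : ℕ), hj⟩ ^ (n - (i : ℕ)))
    else
      if (i : ℕ) < n - k then 0 else Polynomial.X ^ (n - (i : ℕ))

/-- The `k`-th subresultant polynomial of `P` and `G` in terms of the roots `α` of `P`:
`S_k = (−1)^k a^{m−k} · D / V`. -/
def subresPoly {K L : Type*} [Field K] [Field L] [Algebra K L] (n m k : ℕ)
    (a : K) (α : Fin n → L) (G : Polynomial K) : Polynomial L :=
  Polynomial.C ((-1) ^ k * algebraMap K L a ^ (m - k) / (vmat n α).det) *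
    (subresNum n k α G).det

/-- The matrix `W(β)` with `(i,j)` entry `ω_{n−i}(β_j)` (1-based `i`). -/
def Wmat {K L : Type*} [Field K] [Field L] [Algebra K L] (n : ℕ)
    (ω : ℕ → Polynomial K) (α : Fin n → L) : Matrix (Fin n) (Fin n) L :=
  Matrix.of fun i j => Polynomial.aeval (α j) (ω (n - 1 - (i : ℕ)))

/-- The analogue `D_ω` of the subresultant numerator matrix expressed in the general
basis `ω`: rows `1,…,n−k` have entries `ω_{n−k−i}(α_j) G(α_j)` (last column `0`),
rows `n−k+1,…,n+1` have entries `ω_{k+1−i}(α_j)` (last column `ω_{k+1−i}(x)`). -/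
def subresNumW {K L : Type*} [Field K] [Field L] [Algebra K L] (n k : ℕ)
    (ω : ℕ → Polynomial K) (α : Fin n → L) (G : Polynomial K) :
    Matrix (Fin (n + 1)) (Fin (n + 1)) (Polynomial L) :=
  Matrix.of fun i j =>
    if hj : (j : ℕ) < n then
      if (i : ℕ) < n - k then
        Polynomial.C (Polynomial.aeval (α ⟨(j : ℕ), hj⟩) (ω (n - k - 1 - (i : ℕ))) *
          Polynomial.aeval (α ⟨(j : ℕ), hj⟩) G)
      else Polynomial.C (Polynomial.aeval (α ⟨(j : ℕ), hj⟩) (ω (n - (i : ℕ))))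
    else
      if (i : ℕ) < n - k then 0 else (ω (n - (i : ℕ))).map (algebraMap K L)


section Helpers

variable {R : Type*} [AddCommMonoid R]

lemma sum_fin_block1 (N t : ℕ) (ht : t ≤ N + 1) (f : ℕ → R) :
    (∑ i : Fin (N + 1), if (i : ℕ) < t then f (t - 1 - (i : ℕ)) else 0)
      = ∑ e ∈ Finset.range t, f e := by
  refine Eq.trans (Fin.sum_univ_eq_sum_range
    (fun i => if i < t then f (t - 1 - i) else 0) (N + 1)) ?_
  refine Eq.trans (Finset.sum_subset (Finset.range_subset_range.mpr ht)
    fun x _ hx => if_neg (by simp_all)).symm ?_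
  refine Eq.trans (Finset.sum_congr rfl fun x hx => if_pos (Finset.mem_range.mp hx)) ?_
  exact Finset.sum_range_reflect f t

lemma sum_fin_block2 (n k : ℕ) (hk : k ≤ n) (g : ℕ → R) :
    (∑ i : Fin (n + 1), if (i : ℕ) < n - k then 0 else g (n - (i : ℕ)))
      = ∑ e ∈ Finset.range (k + 1), g e := by
  refine Eq.trans (Fin.sum_univ_eq_sum_range
    (fun i => if i < n - k then 0 else g (n - i)) (n + 1)) ?_
  have hsub : Finset.Ico (n - k) (n + 1) ⊆ Finset.range (n + 1) :=
    fun x hx => Finset.mem_range.mpr (Finset.mem_Ico.mp hx).2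
  have h0 := (Finset.sum_subset hsub (f := fun x => if x < n - k then 0 else g (n - x))
    (fun x hx1 hx2 => if_pos (by
      have h1 := Finset.mem_range.mp hx1
      have h2 : ¬(n - k ≤ x ∧ x < n + 1) := fun h => hx2 (Finset.mem_Ico.mpr h)
      omega))).symm
  have h1 : ∑ i ∈ Finset.range (n + 1), (if i < n - k then 0 else g (n - i))
      = ∑ i ∈ Finset.Ico (n - k) (n + 1), g (n - i) :=
    h0.trans (Finset.sum_congr rfl fun x hx =>
      if_neg (by simp only [Finset.mem_Ico] at hx; omega))
  refine h1.trans ?_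
  refine Finset.sum_nbij' (fun a => n - a) (fun e => n - e) ?_ ?_ ?_ ?_ ?_ <;>
    intros <;> simp_all only [Finset.mem_Ico, Finset.mem_range] <;> omega

lemma sum_rev_expand {M : Type*} [AddCommMonoid M] (n : ℕ) (F : ℕ → M) (T : Fin n → M)
    (hT : ∀ l : Fin n, T l = F (n - 1 - (l : ℕ))) :
    ∑ l : Fin n, T l = ∑ e ∈ Finset.range n, F e := by
  rw [← Equiv.sum_comp Fin.revPerm T]
  refine Eq.trans (Finset.sum_congr rfl fun l _ => ?_) (Fin.sum_univ_eq_sum_range F n)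
  rw [hT]
  have hl := l.isLt
  have hrev : ((Fin.revPerm l : Fin n) : ℕ) = n - ((l : ℕ) + 1) := rfl
  rw [hrev]
  congr 1
  omega

end Helpers

section Expand

variable {K L : Type*} [Field K] [Field L] [Algebra K L]

lemma aeval_expand (t : ℕ) (p : Polynomial K) (hp : p.natDegree < t) (β : L) :
    Polynomial.aeval β p = ∑ e ∈ Finset.range t, algebraMap K L (p.coeff e) * β ^ e := by
  rw [Polynomial.aeval_eq_sum_range' hp]
  simp [Algebra.smul_def]

lemma map_expand (t : ℕ) (p : Polynomial K) (hp : p.natDegree < t) :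
    p.map (algebraMap K L)
      = ∑ e ∈ Finset.range t, Polynomial.C (algebraMap K L (p.coeff e)) * Polynomial.X ^ e := by
  conv_lhs => rw [p.as_sum_range' t hp]
  rw [Polynomial.map_sum]
  exact Finset.sum_congr rfl fun e _ => by
    rw [Polynomial.map_monomial, Polynomial.C_mul_X_pow_eq_monomial]

end Expand

section Main

variable {K L : Type*} [Field K] [Field L] [Algebra K L]

/-- change-of-basis matrix for `Wmat`. -/
def Mmat (n : ℕ) (ω : ℕ → Polynomial K) : Matrix (Fin n) (Fin n) L :=
  Matrix.of fun i l => algebraMap K L ((ω (n - 1 - (i : ℕ))).coeff (n - 1 - (l : ℕ)))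

lemma Wmat_eq_mul (n : ℕ) (ω : ℕ → Polynomial K) (hω : IsGeneralBasis n ω)
    (α : Fin n → L) : Wmat n ω α = (Mmat n ω) * vmat n α := by
  refine Matrix.ext fun i j => ?_
  rw [Matrix.mul_apply]
  symm
  have hn : 0 < n := i.pos
  have hdeg : (ω (n - 1 - (i : ℕ))).natDegree = n - 1 - (i : ℕ) :=
    (hω _ (by omega)).2
  refine Eq.trans (sum_rev_expand n
    (fun e => algebraMap K L ((ω (n - 1 - (i : ℕ))).coeff e) * α j ^ e)
    (fun l => Mmat n ω i l * vmat n α l j) (fun l => rfl)) ?_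
  exact (aeval_expand n (ω (n - 1 - (i : ℕ))) (by omega) (α j)).symm

lemma Mmat_det_one (n : ℕ) (ω : ℕ → Polynomial K) (hω : IsGeneralBasis n ω) :
    (Mmat (L := L) n ω).det = 1 := by
  rw [Matrix.det_of_upperTriangular (M := Mmat (L := L) n ω)]
  · refine Finset.prod_eq_one fun i _ => ?_
    have h := hω (n - 1 - (i : ℕ)) (by omega)
    have hc := h.1.coeff_natDegree
    rw [h.2] at hc
    simp only [Mmat, Matrix.of_apply]
    rw [hc]
    simp
  · intro i l hli
    have hli' : (l : ℕ) < (i : ℕ) := hli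
    have h := hω (n - 1 - (i : ℕ)) (by omega)
    have hi := i.isLt
    simp only [Mmat, Matrix.of_apply]
    rw [Polynomial.coeff_eq_zero_of_natDegree_lt (by rw [h.2]; omega), map_zero]

lemma Wmat_det_eq (n : ℕ) (ω : ℕ → Polynomial K) (hω : IsGeneralBasis n ω)
    (α : Fin n → L) : (Wmat n ω α).det = (vmat n α).det := by
  rw [Wmat_eq_mul n ω hω α, Matrix.det_mul, Mmat_det_one n ω hω, one_mul]

lemma vmat_det_ne_zero (n : ℕ) (α : Fin n → L) (hdist : Function.Injective α) :
    (vmat n α).det ≠ 0 := by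
  have hv : vmat n α = ((Matrix.vandermonde α)ᵀ).submatrix Fin.revPerm id := by
    refine Matrix.ext fun i j => ?_
    simp only [vmat, Matrix.of_apply, Matrix.submatrix_apply, Matrix.transpose_apply,
      Matrix.vandermonde_apply, id_eq]
    have hrev : ((Fin.revPerm i : Fin n) : ℕ) = n - ((i : ℕ) + 1) := rfl
    rw [hrev]
    have hi := i.isLt
    congr 1
    omega
  rw [hv, Matrix.det_permute]
  apply mul_ne_zero
  · rcases Int.units_eq_one_or (Equiv.Perm.sign (Fin.revPerm (n := n))) with h | h <;>
      simp [h]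
  · rw [Matrix.det_transpose]
    exact Matrix.det_vandermonde_ne_zero_iff.mpr hdist

/-- change-of-basis matrix for the numerator matrices. -/
def Nmat (n k : ℕ) (ω : ℕ → Polynomial K) :
    Matrix (Fin (n + 1)) (Fin (n + 1)) (Polynomial L) :=
  Matrix.of fun i i' =>
    if (i : ℕ) < n - k then
      (if (i' : ℕ) < n - k then
        Polynomial.C (algebraMap K L ((ω (n - k - 1 - (i : ℕ))).coeff (n - k - 1 - (i' : ℕ))))
       else 0)
    else
      (if (i' : ℕ) < n - k then 0
       else Polynomial.C (algebraMap K L ((ω (n - (i : ℕ))).coeff (n - (i' : ℕ)))))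

lemma subresNumW_eq_mul (n m k : ℕ) (hmn : m < n) (hkm : k ≤ m)
    (ω : ℕ → Polynomial K) (hω : IsGeneralBasis n ω)
    (α : Fin n → L) (Q : Polynomial K) :
    subresNumW n k ω α Q = (Nmat n k ω) * subresNum n k α Q := by
  have hkn : k < n := lt_of_le_of_lt hkm hmn
  refine Matrix.ext fun i j => ?_
  rw [Matrix.mul_apply]
  symm
  by_cases hj : (j : ℕ) < n
  · by_cases hi : (i : ℕ) < n - k
    · -- top block, regular column
      set F : ℕ → Polynomial L := fun e =>
        Polynomial.C (algebraMap K L ((ω (n - k - 1 - (i : ℕ))).coeff e) *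
          (α ⟨(j : ℕ), hj⟩ ^ e * Polynomial.aeval (α ⟨(j : ℕ), hj⟩) Q)) with hF
      have hsum : ∀ i' : Fin (n + 1),
          Nmat (L := L) n k ω i i' * subresNum n k α Q i' j =
          (if (i' : ℕ) < n - k then F (n - k - 1 - (i' : ℕ)) else 0) := by
        intro i'
        by_cases hi' : (i' : ℕ) < n - k <;>
          simp [Nmat, subresNum, hj, hi, hi', hF]
      rw [Finset.sum_congr rfl fun i' _ => hsum i',
        sum_fin_block1 n (n - k) (by omega) F]
      have hdeg : (ω (n - k - 1 - (i : ℕ))).natDegree = n - k - 1 - (i : ℕ) :=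
        (hω _ (by omega)).2
      simp only [subresNumW, Matrix.of_apply]
      rw [dif_pos hj, if_pos hi,
        aeval_expand (n - k) (ω (n - k - 1 - (i : ℕ))) (by omega) (α ⟨(j : ℕ), hj⟩),
        Finset.sum_mul, map_sum]
      refine Finset.sum_congr rfl fun e _ => ?_
      simp only [hF]
      exact congrArg _ (by ring)
    · -- bottom block, regular column
      set F : ℕ → Polynomial L := fun e =>
        Polynomial.C (algebraMap K L ((ω (n - (i : ℕ))).coeff e) *
          α ⟨(j : ℕ), hj⟩ ^ e) with hF
      have hsum : ∀ i' : Fin (n + 1),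
          Nmat (L := L) n k ω i i' * subresNum n k α Q i' j =
          (if (i' : ℕ) < n - k then 0 else F (n - (i' : ℕ))) := by
        intro i'
        by_cases hi' : (i' : ℕ) < n - k <;>
          simp [Nmat, subresNum, hj, hi, hi', hF]
      rw [Finset.sum_congr rfl fun i' _ => hsum i',
        sum_fin_block2 n k (le_of_lt hkn) F]
      have hin : (i : ℕ) ≤ n := by omega
      have hdeg : (ω (n - (i : ℕ))).natDegree = n - (i : ℕ) :=
        (hω _ (by omega)).2
      simp only [subresNumW, Matrix.of_apply]
      rw [dif_pos hj, if_neg hi,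
        aeval_expand (k + 1) (ω (n - (i : ℕ))) (by omega) (α ⟨(j : ℕ), hj⟩),
        map_sum]
  · by_cases hi : (i : ℕ) < n - k
    · -- top block, last column
      have hsum : ∀ i' : Fin (n + 1),
          Nmat (L := L) n k ω i i' * subresNum n k α Q i' j = 0 := by
        intro i'
        by_cases hi' : (i' : ℕ) < n - k <;>
          simp [Nmat, subresNum, hj, hi, hi']
      rw [Finset.sum_congr rfl fun i' _ => hsum i', Finset.sum_const_zero]
      simp [subresNumW, hj, hi]
    · -- bottom block, last column
      set F : ℕ → Polynomial L := fun e =>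
        Polynomial.C (algebraMap K L ((ω (n - (i : ℕ))).coeff e)) * Polynomial.X ^ e with hF
      have hsum : ∀ i' : Fin (n + 1),
          Nmat (L := L) n k ω i i' * subresNum n k α Q i' j =
          (if (i' : ℕ) < n - k then 0 else F (n - (i' : ℕ))) := by
        intro i'
        by_cases hi' : (i' : ℕ) < n - k <;>
          simp [Nmat, subresNum, hj, hi, hi', hF]
      rw [Finset.sum_congr rfl fun i' _ => hsum i',
        sum_fin_block2 n k (le_of_lt hkn) F]
      have hdeg : (ω (n - (i : ℕ))).natDegree = n - (i : ℕ) :=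
        (hω _ (by omega)).2
      simp only [subresNumW, Matrix.of_apply]
      rw [dif_neg hj, if_neg hi, map_expand (k + 1) (ω (n - (i : ℕ))) (by omega)]

lemma Nmat_det_one (n m k : ℕ) (hmn : m < n) (hkm : k ≤ m)
    (ω : ℕ → Polynomial K) (hω : IsGeneralBasis n ω) :
    (Nmat (L := L) n k ω).det = 1 := by
  rw [Matrix.det_of_upperTriangular (M := Nmat (L := L) n k ω)]
  · refine Finset.prod_eq_one fun i _ => ?_
    simp only [Nmat, Matrix.of_apply]
    by_cases hi : (i : ℕ) < n - k
    · have h := hω (n - k - 1 - (i : ℕ)) (by omega)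
      have hc := h.1.coeff_natDegree
      rw [h.2] at hc
      rw [if_pos hi, if_pos hi, hc]
      simp
    · have h := hω (n - (i : ℕ)) (by omega)
      have hc := h.1.coeff_natDegree
      rw [h.2] at hc
      rw [if_neg hi, if_neg hi, hc]
      simp
  · intro i i' hlt
    have hlt' : (i' : ℕ) < (i : ℕ) := hlt
    simp only [Nmat, Matrix.of_apply]
    by_cases hi : (i : ℕ) < n - k
    · rw [if_pos hi, if_pos (by omega)]
      have h := hω (n - k - 1 - (i : ℕ)) (by omega)
      rw [Polynomial.coeff_eq_zero_of_natDegree_lt (by rw [h.2]; omega), map_zero, map_zero]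
    · rw [if_neg hi]
      by_cases hi' : (i' : ℕ) < n - k
      · rw [if_pos hi']
      · rw [if_neg hi']
        have h := hω (n - (i : ℕ)) (by omega)
        have hin : (i : ℕ) ≤ n := by omega
        rw [Polynomial.coeff_eq_zero_of_natDegree_lt (by rw [h.2]; omega), map_zero, map_zero]

end Main


/-- the `k`-th subresultant polynomial of `F` and `G` (with
squarefree `F` of degree `n > m = deg G`) can be written in the general basis `ω`:
`S_k = (−1)^k aₙ^{m−k} · D_ω / det W(α)`, and `det W(α) ≠ 0`. -/
theorem subresultant_in_general_basis_via_roots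
    {K : Type*} [Field K] (n m k : ℕ) (hmn : m < n) (hkm : k ≤ m)
    (ω : ℕ → Polynomial K) (hω : IsGeneralBasis n ω)
    (P Q : Polynomial K) (hdegP : P.natDegree = n) (hdegQ : Q.natDegree = m)
    (α : Fin n → AlgebraicClosure K)
    (hfact : P.map (algebraMap K (AlgebraicClosure K)) =
      Polynomial.C (algebraMap K (AlgebraicClosure K) P.leadingCoeff) *
        ∏ j : Fin n, (Polynomial.X - Polynomial.C (α j)))
    (hdist : Function.Injective α) :
    (Wmat n ω α).det ≠ 0 ∧
      subresPoly n m k P.leadingCoeff α Q =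
        Polynomial.C ((-1) ^ k *
            algebraMap K (AlgebraicClosure K) P.leadingCoeff ^ (m - k) /
            (Wmat n ω α).det) *
          (subresNumW n k ω α Q).det := by
  have hW := Wmat_det_eq n ω hω α
  constructor
  · rw [hW]
    exact vmat_det_ne_zero n α hdist
  · rw [hW]
    rw [subresNumW_eq_mul n m k hmn hkm ω hω α Q, Matrix.det_mul,
      Nmat_det_one n m k hmn hkm ω hω, one_mul]
    rfl
end
end

section
/- Let ω = (ω_n, …, ω_1, ω_0) be a general basis of the polynomials of degree ≤ n over a field F, let G ∈ F[x], let α_1, …, α_n ∈ F̄ be arbitrary (not necessarily distinct), and let 0 ≤ k < n. Then the following two (n+1)×(n+1) determinants over F̄[x] are equal: (i) the determinant whose entry in row i (1 ≤ i ≤ n−k) and column j (1 ≤ j ≤ n) is α_j^{n−k−i} G(α_j) with last-column entry 0, and whose entry in row n−k+i (1 ≤ i ≤ k+1) and column j is α_j^{k+1−i} with last-column entry x^{k+1−i}; and (ii) the determinant whose entry in row i (1 ≤ i ≤ n−k) and column j is ω_{n−k−i}(α_j) G(α_j) with last-column entry 0, and whose entry in row n−k+i (1 ≤ i ≤ k+1)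 and column j is ω_{k+1−i}(α_j) with last-column entry ω_{k+1−i}(x). -/
open Polynomial Matrix BigOperators

noncomputable section

private lemma sum_fin_rev1 {M : Type*} [AddCommMonoid M] (n N : ℕ) (hN : N ≤ n + 1)
    (g : Fin (n+1) → M) (f : ℕ → M)
    (h0 : ∀ i' : Fin (n+1), N ≤ (i' : ℕ) → g i' = 0)
    (h1 : ∀ i' : Fin (n+1), (i' : ℕ) < N → g i' = f (N - 1 - (i' : ℕ))) :
    ∑ i', g i' = ∑ m ∈ Finset.range N, f m := by
  classical
  have : ∑ i', g i' = ∑ m ∈ Finset.range (n+1),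
      (if h : m < n + 1 then g ⟨m, h⟩ else 0) := by
    rw [← Fin.sum_univ_eq_sum_range]
    apply Finset.sum_congr rfl
    intro i _
    simp [i.isLt]
  rw [this]
  rw [← Finset.sum_subset (Finset.range_subset_range.2 hN)]
  · rw [← Finset.sum_range_reflect f N]
    apply Finset.sum_congr rfl
    intro m hm
    simp only [Finset.mem_range] at hm
    rw [dif_pos (lt_of_lt_of_le hm hN)]
    exact h1 _ hm
  · intro m _ hm
    simp only [Finset.mem_range, not_lt] at hm
    split
    · exact h0 _ hm
    · rfl

private lemma sum_fin_rev2 {M : Type*} [AddCommMonoid M] (n N : ℕ) (hN : N ≤ n)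
    (g : Fin (n+1) → M) (f : ℕ → M)
    (h0 : ∀ i' : Fin (n+1), (i' : ℕ) < N → g i' = 0)
    (h1 : ∀ i' : Fin (n+1), N ≤ (i' : ℕ) → g i' = f (n - (i' : ℕ))) :
    ∑ i', g i' = ∑ m ∈ Finset.range (n + 1 - N), f m := by
  classical
  have key : ∑ i', g i' = ∑ m ∈ Finset.range (n+1),
      (if h : m < n + 1 then g ⟨m, h⟩ else 0) := by
    rw [← Fin.sum_univ_eq_sum_range]
    apply Finset.sum_congr rfl
    intro i _
    simp [i.isLt]
  rw [key]
  rw [← Finset.sum_range_reflect (fun m => if h : m < n + 1 then g ⟨m, h⟩ else 0) (n+1)]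
  rw [← Finset.sum_subset (Finset.range_subset_range.2 (by omega : n + 1 - N ≤ n + 1))]
  · apply Finset.sum_congr rfl
    intro m hm
    simp only [Finset.mem_range] at hm
    have hm' : n + 1 - 1 - m < n + 1 := by omega
    rw [dif_pos hm']
    have : (⟨n + 1 - 1 - m, hm'⟩ : Fin (n+1)) = ⟨n - m, by omega⟩ :=
      Fin.mk_eq_mk.2 (by omega)
    rw [this, h1 _ (show N ≤ n - m by omega)]
    congr 1
    simp; omega
  · intro m hmr hm
    simp only [Finset.mem_range, not_lt] at hmr hm
    have hm' : n + 1 - 1 - m < n + 1 := by omega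
    rw [dif_pos hm']
    exact h0 _ (show (n + 1 - 1 - m : ℕ) < N by omega)

/-- the two `(n+1) × (n+1)` determinants, one built from powers of
the `α_j` and one built from the general basis `ω` evaluated at the `α_j`, coincide. -/
theorem subres_num_det_power_eq_general
    {K : Type*} [Field K] (n k : ℕ) (hkn : k < n)
    (ω : ℕ → Polynomial K) (hω : IsGeneralBasis n ω)
    (G : Polynomial K) (α : Fin n → AlgebraicClosure K) :
    (subresNum n k α G).det = (subresNumW n k ω α G).det := by
  classical
  let L := AlgebraicClosure K
  set φ : K →+* L := algebraMap K L with hφ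
  set T : Matrix (Fin (n+1)) (Fin (n+1)) (Polynomial L) := Matrix.of (fun i i' =>
    if (i : ℕ) < n - k then
      (if (i' : ℕ) < n - k then
        Polynomial.C (φ ((ω (n - k - 1 - (i : ℕ))).coeff (n - k - 1 - (i' : ℕ)))) else 0)
    else
      (if (i' : ℕ) < n - k then 0 else
        Polynomial.C (φ ((ω (n - (i : ℕ))).coeff (n - (i' : ℕ)))))) with hT
  -- degrees of the ω's
  have hdeg : ∀ d ≤ n, (ω d).natDegree = d := fun d hd => (hω d hd).2
  have hmon : ∀ d ≤ n, (ω d).Monic := fun d hd => (hω d hd).1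
  -- T is upper triangular with unit diagonal
  have hTtri : T.BlockTriangular id := by
    intro i i' hii'
    simp only [id] at hii'
    have hlt : (i' : ℕ) < (i : ℕ) := hii'
    simp only [hT, Matrix.of_apply]
    by_cases hi : (i : ℕ) < n - k
    · have hi' : (i' : ℕ) < n - k := by omega
      rw [if_pos hi, if_pos hi']
      have : (ω (n - k - 1 - (i : ℕ))).coeff (n - k - 1 - (i' : ℕ)) = 0 := by
        apply Polynomial.coeff_eq_zero_of_natDegree_lt
        rw [hdeg _ (by omega)]
        omega
      simp [this]
    · rw [if_neg hi]
      by_cases hi' : (i' : ℕ) < n - k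
      · rw [if_pos hi']
      · rw [if_neg hi']
        have : (ω (n - (i : ℕ))).coeff (n - (i' : ℕ)) = 0 := by
          apply Polynomial.coeff_eq_zero_of_natDegree_lt
          rw [hdeg _ (by omega)]
          have := i.isLt
          omega
        simp [this]
  have hTdiag : ∀ i : Fin (n+1), T i i = 1 := by
    intro i
    simp only [hT, Matrix.of_apply]
    by_cases hi : (i : ℕ) < n - k
    · rw [if_pos hi, if_pos hi]
      have h1 : (ω (n - k - 1 - (i : ℕ))).coeff (n - k - 1 - (i : ℕ)) = 1 := by
        have := (hmon _ (by omega : n - k - 1 - (i : ℕ) ≤ n)).coeff_natDegree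
        rwa [hdeg _ (by omega)] at this
      simp [h1]
    · rw [if_neg hi, if_neg hi]
      have h1 : (ω (n - (i : ℕ))).coeff (n - (i : ℕ)) = 1 := by
        have := (hmon _ (by omega : n - (i : ℕ) ≤ n)).coeff_natDegree
        rwa [hdeg _ (by omega)] at this
      simp [h1]
  have hTdet : T.det = 1 := by
    rw [Matrix.det_of_upperTriangular hTtri]
    simp [hTdiag]
  -- the main matrix identity
  have hWT : subresNumW n k ω α G = T * subresNum n k α G := by
    refine Matrix.ext fun i j => ?_
    rw [Matrix.mul_apply]
    by_cases hj : (j : ℕ) < n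
    · set a : L := α ⟨(j : ℕ), hj⟩ with ha
      by_cases hi : (i : ℕ) < n - k
      · -- row in the G-block, column < n
        have hsum := sum_fin_rev1 n (n - k) (by omega)
          (fun i' => T i i' * subresNum n k α G i' j)
          (fun m => Polynomial.C (φ ((ω (n - k - 1 - (i : ℕ))).coeff m) *
            (a ^ m * Polynomial.aeval a G)))
          (fun i' hi' => by
            simp only [hT, Matrix.of_apply, if_pos hi, if_neg (not_lt.2 hi')]
            ring)
          (fun i' hi' => by
            simp only [hT, subresNum, Matrix.of_apply, if_pos hi, if_pos hi',
              dif_pos hj, ← ha]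
            rw [← Polynomial.C_mul])
        rw [hsum]
        simp only [subresNumW, Matrix.of_apply, dif_pos hj, if_pos hi, ← ha]
        have hev : Polynomial.aeval a (ω (n - k - 1 - (i : ℕ))) =
            ∑ m ∈ Finset.range (n - k), (ω (n - k - 1 - (i : ℕ))).coeff m • a ^ m :=
          Polynomial.aeval_eq_sum_range' (by rw [hdeg _ (by omega)]; omega) a
        rw [hev, Finset.sum_mul, map_sum]
        refine Finset.sum_congr rfl fun m _ => ?_
        rw [Algebra.smul_def]
        congr 1
        ring
      · -- row in the power-block, column < n
        have hsum := sum_fin_rev2 n (n - k) (by omega)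
          (fun i' => T i i' * subresNum n k α G i' j)
          (fun m => Polynomial.C (φ ((ω (n - (i : ℕ))).coeff m) * a ^ m))
          (fun i' hi' => by
            simp only [hT, Matrix.of_apply, if_neg hi, if_pos hi']
            ring)
          (fun i' hi' => by
            simp only [hT, subresNum, Matrix.of_apply, if_neg hi,
              if_neg (not_lt.2 hi'), dif_pos hj, ← ha]
            rw [← Polynomial.C_mul])
        rw [hsum]
        simp only [subresNumW, Matrix.of_apply, dif_pos hj, if_neg hi, ← ha]
        have hnk : n + 1 - (n - k) = k + 1 := by omega
        rw [hnk]
        have hev : Polynomial.aeval a (ω (n - (i : ℕ))) =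
            ∑ m ∈ Finset.range (k + 1), (ω (n - (i : ℕ))).coeff m • a ^ m :=
          Polynomial.aeval_eq_sum_range'
            (by rw [hdeg _ (by omega)]; have := i.isLt; omega) a
        rw [hev, map_sum]
        refine Finset.sum_congr rfl fun m _ => ?_
        rw [Algebra.smul_def]
    · by_cases hi : (i : ℕ) < n - k
      · -- zero row of last column
        simp only [subresNumW, Matrix.of_apply, dif_neg hj, if_pos hi]
        symm
        apply Finset.sum_eq_zero
        intro i' _
        by_cases hi' : (i' : ℕ) < n - k
        · simp [subresNum, dif_neg hj, hi']
        · simp only [hT, Matrix.of_apply, if_pos hi, if_neg hi']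
          ring
      · -- ω(x) entries of last column
        have hsum := sum_fin_rev2 n (n - k) (by omega)
          (fun i' => T i i' * subresNum n k α G i' j)
          (fun m => Polynomial.C (φ ((ω (n - (i : ℕ))).coeff m)) * Polynomial.X ^ m)
          (fun i' hi' => by
            simp only [hT, Matrix.of_apply, if_neg hi, if_pos hi']
            ring)
          (fun i' hi' => by
            simp only [hT, subresNum, Matrix.of_apply, if_neg hi,
              if_neg (not_lt.2 hi'), dif_neg hj])
        rw [hsum]
        simp only [subresNumW, Matrix.of_apply, dif_neg hj, if_neg hi]
        have hnk : n + 1 - (n - k) = k + 1 := by omega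
        rw [hnk]
        have hd : (ω (n - (i : ℕ))).natDegree < k + 1 := by
          rw [hdeg _ (by omega)]; have := i.isLt; omega
        conv_lhs => rw [(ω (n - (i : ℕ))).as_sum_range' (k+1) hd]
        rw [Polynomial.map_sum]
        apply Finset.sum_congr rfl
        intro m _
        rw [Polynomial.map_monomial, ← Polynomial.C_mul_X_pow_eq_monomial]
  rw [hWT, Matrix.det_mul, hTdet, one_mul]
end
end

section
/- Let ω = (ω_n, …, ω_1, ω_0) be a general basis of the polynomials of degree ≤ n over a field F, let F(x) = a_n ∏_{j=1}^n (x − α_j) with a_n ∈ F, a_n ≠ 0 and α_1, …, α_n ∈ F̄ (not necessarily distinct), and let G ∈ F[x] with deg G = m < n. Let B_ω be the Bézout matrix of F and G in ω. Then, as an identity of n×n matrices over F̄: B_ω · W(α) = a_n · U^T · T · U · M_G, where W(α) is the n×n matrix with (i,j) entry ω_{n−i}(α_j), M_G is the n×n matrix with (i,j) entry ω_{n−i}(α_j)·G(α_j), U is the transition matrix from the standard basis to ω̄, and T is the matrix of signed elementary symmetric polynomials defined below. -/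
open Polynomial Matrix BigOperators

noncomputable section

/-- `B` is the Bézout matrix of `P` and `Q` in the basis `ω`:
`P(x)Q(y) − P(y)Q(x) = (x − y) · ω̄(x)ᵀ B ω̄(y)` in `K[x,y] = (K[y])[x]`,
where the outer variable is `x` and the inner one is `y`, and
`ω̄ = (ω_{n−1}, …, ω_1, ω_0)ᵀ`. -/
def BezoutRelation {K : Type*} [Field K] (n : ℕ) (ω : ℕ → Polynomial K)
    (P Q : Polynomial K) (B : Matrix (Fin n) (Fin n) K) : Prop :=
  P.map Polynomial.C * Polynomial.C Q - Polynomial.C P * Q.map Polynomial.C =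
    (Polynomial.X - Polynomial.C Polynomial.X) *
      ∑ i : Fin n, ∑ j : Fin n,
        (ω (n - 1 - (i : ℕ))).map Polynomial.C * Polynomial.C (ω (n - 1 - (j : ℕ))) *
          Polynomial.C (Polynomial.C (B i j))

section helpers2
open Finset
variable {L : Type*} [CommRing L]

variable {L : Type*} [CommRing L]

lemma reindex (n : ℕ) (c : ℕ → L) (x y : L) :
    ∑ r ∈ range (n+1), c r * ∑ s ∈ range r, x^s * y^(r-1-s)
      = ∑ i ∈ range n, ∑ k ∈ range n,
          (if i+k+1 ≤ n then c (i+k+1) else 0) * x^i * y^k := by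
  have hrhs : ∀ i k : ℕ, (if i+k+1 ≤ n then c (i+k+1) else 0) * x^i * y^k
      = if i+k+1 ≤ n then c (i+k+1) * (x^i * y^k) else 0 := by
    intro i k; split <;> simp [mul_assoc]
  simp only [hrhs, ← Finset.sum_product']
  rw [← Finset.sum_filter]
  simp only [Finset.mul_sum]
  rw [Finset.sum_sigma']
  refine Finset.sum_nbij' (fun p => (p.2, p.1 - 1 - p.2)) (fun q => ⟨q.1 + q.2 + 1, q.1⟩)
    ?_ ?_ ?_ ?_ ?_
  · rintro ⟨r, s⟩ hp
    simp only [Finset.mem_sigma, Finset.mem_range] at hp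
    simp only [Finset.mem_filter, Finset.mem_product, Finset.mem_range]
    omega
  · rintro ⟨i, k⟩ hq
    simp only [Finset.mem_filter, Finset.mem_product, Finset.mem_range] at hq
    simp only [Finset.mem_sigma, Finset.mem_range]
    omega
  · rintro ⟨r, s⟩ hp
    simp only [Finset.mem_sigma, Finset.mem_range] at hp
    have h1 : s + (r - 1 - s) + 1 = r := by omega
    simp only [h1]
  · rintro ⟨i, k⟩ hq
    simp only [Finset.mem_filter, Finset.mem_product, Finset.mem_range] at hq
    simp only [Prod.mk.injEq]
    exact ⟨trivial, by omega⟩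
  · rintro ⟨r, s⟩ hp
    simp only [Finset.mem_sigma, Finset.mem_range] at hp
    have h1 : s + (r - 1 - s) + 1 = r := by omega
    simp only []
    rw [h1]

lemma key_id [Nontrivial L] (n : ℕ) (α : Fin n → L) (x y : L) :
    (∏ l : Fin n, (x - α l)) - (∏ l : Fin n, (y - α l)) =
      (x - y) * ∑ i : Fin n, ∑ k : Fin n,
        (if n ≤ (i:ℕ)+(k:ℕ)+1 then
            (-1:L)^((i:ℕ)+(k:ℕ)+1-n) *
              (Multiset.map α Finset.univ.val).esymm ((i:ℕ)+(k:ℕ)+1-n)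
          else 0) * x^(n-1-(i:ℕ)) * y^(n-1-(k:ℕ)) := by
  set s : Multiset L := Multiset.map α Finset.univ.val with hs
  have hcard : Multiset.card s = n := by simp [hs]
  set c : ℕ → L := fun r => (-1:L)^(n-r) * s.esymm (n-r) with hc
  have heval : ∀ z : L, (∏ l : Fin n, (z - α l)) = ∑ r ∈ range (n+1), c r * z^r := by
    intro z
    have hmon : ∀ q ∈ s.map (fun t => X - C t), q.Monic := by
      intro q hq
      obtain ⟨t, _, rfl⟩ := Multiset.mem_map.mp hq
      exact monic_X_sub_C t
    have hdeg : ((s.map fun t => X - C t).prod).natDegree = n := by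
      rw [Polynomial.natDegree_multiset_prod_of_monic _ hmon]
      simp [Multiset.map_map, hcard]
    have h1 : (∏ l : Fin n, (z - α l)) = eval z ((s.map fun t => X - C t).prod) := by
      rw [Polynomial.eval_multiset_prod, Multiset.map_map, hs, Multiset.map_map]
      simp [Finset.prod]
    rw [h1, Polynomial.eval_eq_sum_range, hdeg]
    refine Finset.sum_congr rfl fun r hr => ?_
    have hr' : r ≤ Multiset.card s := by
      rw [hcard]; exact Nat.lt_succ_iff.mp (Finset.mem_range.mp hr)
    rw [Multiset.prod_X_sub_C_coeff s hr', hcard]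
  rw [heval x, heval y, ← Finset.sum_sub_distrib]
  have step : ∀ r : ℕ, c r * x^r - c r * y^r
      = (x - y) * (c r * ∑ t ∈ range r, x^t * y^(r-1-t)) := by
    intro r
    rw [← mul_sub, ← geom_sum₂_mul x y r]; ring
  simp only [step, ← Finset.mul_sum]
  congr 1
  rw [reindex n c x y]
  have refl2 : ∀ (g : ℕ → ℕ → L),
      (∑ i ∈ range n, ∑ k ∈ range n, g (n-1-i) (n-1-k))
        = ∑ i ∈ range n, ∑ k ∈ range n, g i k := by
    intro g
    rw [Finset.sum_range_reflect (fun i => ∑ k ∈ range n, g i (n-1-k)) n]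
    exact Finset.sum_congr rfl fun i _ => Finset.sum_range_reflect (g i) n
  rw [← refl2 (fun i k => (if i+k+1 ≤ n then c (i+k+1) else 0) * x^i * y^k)]
  rw [← Fin.sum_univ_eq_sum_range]
  refine Finset.sum_congr rfl fun i _ => ?_
  rw [← Fin.sum_univ_eq_sum_range]
  refine Finset.sum_congr rfl fun k _ => ?_
  have hi : (i:ℕ) < n := i.isLt
  have hk : (k:ℕ) < n := k.isLt
  by_cases h : n ≤ (i:ℕ)+(k:ℕ)+1
  · have h1 : (n-1-(i:ℕ)) + (n-1-(k:ℕ)) + 1 ≤ n := by omega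
    have h2 : n - ((n-1-(i:ℕ)) + (n-1-(k:ℕ)) + 1) = (i:ℕ)+(k:ℕ)+1-n := by omega
    simp only [if_pos h1, if_pos h, hc, h2]
  · have h1 : ¬ ((n-1-(i:ℕ)) + (n-1-(k:ℕ)) + 1 ≤ n) := by omega
    simp only [if_neg h1, if_neg h]

lemma indep {L : Type*} [Field L] {n : ℕ} (f : Fin n → Polynomial L)
    (hmon : ∀ i, (f i).Monic) (hdeg : ∀ i : Fin n, (f i).natDegree = n - 1 - (i:ℕ))
    (c : Fin n → L) (h : ∑ i : Fin n, f i * Polynomial.C (c i) = 0) : ∀ i, c i = 0 := by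
  have key : ∀ N : ℕ, ∀ i : Fin n, (i : ℕ) = N → c i = 0 := by
    intro N
    induction N using Nat.strong_induction_on with
    | _ N IH =>
      intro i hiN
      have hcoeff := congrArg (fun p => Polynomial.coeff p (n - 1 - (i:ℕ))) h
      simp only [Polynomial.finset_sum_coeff, Polynomial.coeff_mul_C,
        Polynomial.coeff_zero] at hcoeff
      rw [Finset.sum_eq_single i] at hcoeff
      · rw [← hdeg i, (hmon i).coeff_natDegree, one_mul] at hcoeff
        exact hcoeff
      · intro k _ hk
        rcases lt_or_gt_of_ne (fun hkk : (k:ℕ) = (i:ℕ) => hk (Fin.ext hkk)) with hlt | hgt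
        · rw [IH (k:ℕ) (by omega) k rfl, mul_zero]
        · rw [Polynomial.coeff_eq_zero_of_natDegree_lt, zero_mul]
          rw [hdeg k]
          have := i.isLt
          have := k.isLt
          omega
      · intro hi; exact absurd (Finset.mem_univ i) hi
  exact fun i => key (i:ℕ) i rfl

end helpers2

section helpers

variable {L : Type*} [CommRing L]

lemma sum4_swap {M : Type*} [AddCommMonoid M] {n : ℕ}
    (f : Fin n → Fin n → Fin n → Fin n → M) :
    ∑ i : Fin n, ∑ k : Fin n, ∑ p : Fin n, ∑ q : Fin n, f i k p q
      = ∑ p : Fin n, ∑ q : Fin n, ∑ k : Fin n, ∑ i : Fin n, f i k p q :=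
  calc ∑ i : Fin n, ∑ k : Fin n, ∑ p : Fin n, ∑ q : Fin n, f i k p q
      = ∑ i : Fin n, ∑ p : Fin n, ∑ k : Fin n, ∑ q : Fin n, f i k p q :=
        Finset.sum_congr rfl fun i _ => Finset.sum_comm
    _ = ∑ p : Fin n, ∑ i : Fin n, ∑ k : Fin n, ∑ q : Fin n, f i k p q := Finset.sum_comm
    _ = ∑ p : Fin n, ∑ i : Fin n, ∑ q : Fin n, ∑ k : Fin n, f i k p q :=
        Finset.sum_congr rfl fun p _ => Finset.sum_congr rfl fun i _ => Finset.sum_comm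
    _ = ∑ p : Fin n, ∑ q : Fin n, ∑ i : Fin n, ∑ k : Fin n, f i k p q :=
        Finset.sum_congr rfl fun p _ => Finset.sum_comm
    _ = ∑ p : Fin n, ∑ q : Fin n, ∑ k : Fin n, ∑ i : Fin n, f i k p q :=
        Finset.sum_congr rfl fun p _ => Finset.sum_congr rfl fun q _ => Finset.sum_comm

end helpers


/-- `B_ω · W(α) = aₙ · Uᵀ · T · U · M_G`, where `T` is the matrix of
signed elementary symmetric polynomials in the roots `α` of `F`, `U` is the
transition matrix from the power basis to `ω̄`, and `M_G` has entries
`ω_{n−i}(α_j) G(α_j)`. -/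
theorem bezout_matrix_mul_W_eq
    {K : Type*} [Field K] (n m : ℕ) (hmn : m < n)
    (ω : ℕ → Polynomial K) (hω : IsGeneralBasis n ω)
    (P Q : Polynomial K) (a : K) (ha : a ≠ 0)
    (hdegP : P.natDegree = n) (hdegQ : Q.natDegree = m)
    (α : Fin n → AlgebraicClosure K)
    (hfact : P.map (algebraMap K (AlgebraicClosure K)) =
      Polynomial.C (algebraMap K (AlgebraicClosure K) a) *
        ∏ j : Fin n, (Polynomial.X - Polynomial.C (α j)))
    (B : Matrix (Fin n) (Fin n) K) (hB : BezoutRelation n ω P Q B)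
    (U : Matrix (Fin n) (Fin n) K)
    (hUtri : ∀ i j : Fin n, (j : ℕ) < (i : ℕ) → U i j = 0)
    (hUdiag : ∀ i : Fin n, U i i = 1)
    (hU : ∀ i : Fin n, (Polynomial.X : Polynomial K) ^ (n - 1 - (i : ℕ)) =
      ∑ j : Fin n, Polynomial.C (U i j) * ω (n - 1 - (j : ℕ))) :
    B.map (algebraMap K (AlgebraicClosure K)) * Wmat n ω α =
      algebraMap K (AlgebraicClosure K) a •
        ((U.map (algebraMap K (AlgebraicClosure K)))ᵀ *
          (Matrix.of fun i j : Fin n =>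
            if n ≤ (i : ℕ) + (j : ℕ) + 1 then
              (-1 : AlgebraicClosure K) ^ ((i : ℕ) + (j : ℕ) + 1 - n) *
                (Multiset.map α Finset.univ.val).esymm ((i : ℕ) + (j : ℕ) + 1 - n)
            else 0) *
          U.map (algebraMap K (AlgebraicClosure K)) *
          (Matrix.of fun i j : Fin n =>
            Polynomial.aeval (α j) (ω (n - 1 - (i : ℕ))) *
              Polynomial.aeval (α j) Q)) := by
  classical
  set φ := algebraMap K (AlgebraicClosure K) with hφ
  have hn : 0 < n := Nat.lt_of_le_of_lt (Nat.zero_le m) hmn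
  set T : Fin n → Fin n → AlgebraicClosure K := fun i k =>
    if n ≤ (i : ℕ) + (k : ℕ) + 1 then
      (-1 : AlgebraicClosure K) ^ ((i : ℕ) + (k : ℕ) + 1 - n) *
        (Multiset.map α Finset.univ.val).esymm ((i : ℕ) + (k : ℕ) + 1 - n)
    else 0 with hT
  have hPx : ∀ x : AlgebraicClosure K, aeval x P = φ a * ∏ l : Fin n, (x - α l) := by
    intro x
    rw [aeval_def, ← Polynomial.eval_map, hfact]
    simp [Polynomial.eval_prod]
  have hProots : ∀ j : Fin n, (∏ l : Fin n, ((α j) - α l)) = 0 := fun j =>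
    Finset.prod_eq_zero (Finset.mem_univ j) (sub_self _)
  have hPα : ∀ j : Fin n, aeval (α j) P = 0 := fun j => by
    rw [hPx (α j), hProots j, mul_zero]
  have hωmon : ∀ i : Fin n, ((ω (n-1-(i:ℕ))).map φ).Monic := fun i =>
    ((hω (n-1-(i:ℕ)) (by omega)).1).map φ
  have hωdeg : ∀ i : Fin n, ((ω (n-1-(i:ℕ))).map φ).natDegree = n-1-(i:ℕ) := fun i => by
    rw [((hω (n-1-(i:ℕ)) (by omega)).1).natDegree_map]
    exact (hω (n-1-(i:ℕ)) (by omega)).2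
  have hUz : ∀ (z : AlgebraicClosure K) (i : Fin n),
      z ^ (n-1-(i:ℕ)) = ∑ p : Fin n, φ (U i p) * aeval z (ω (n-1-(p:ℕ))) := by
    intro z i
    have h := congrArg (aeval z : Polynomial K →ₐ[K] AlgebraicClosure K) (hU i)
    simpa using h
  have hBez : ∀ (j : Fin n) (x : AlgebraicClosure K),
      aeval x P * aeval (α j) Q - aeval (α j) P * aeval x Q
        = (x - α j) * ∑ i : Fin n, ∑ k : Fin n,
            aeval x (ω (n-1-(i:ℕ))) * aeval (α j) (ω (n-1-(k:ℕ))) * φ (B i k) := by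
    intro j x
    rw [BezoutRelation] at hB
    have h := congrArg
      (Polynomial.eval₂ ((aeval (α j) : Polynomial K →ₐ[K] AlgebraicClosure K).toRingHom) x) hB
    have hfC : ((aeval (α j) : Polynomial K →ₐ[K] AlgebraicClosure K) :
          Polynomial K →+* AlgebraicClosure K).comp
        (Polynomial.C : K →+* Polynomial K) = algebraMap K (AlgebraicClosure K) := by
      ext1 b; simp
    simp only [Polynomial.eval₂_sub, Polynomial.eval₂_mul, Polynomial.eval₂_C,
      Polynomial.eval₂_X, Polynomial.eval₂_finset_sum, Polynomial.eval₂_map,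
      AlgHom.toRingHom_eq_coe, RingHom.coe_coe, AlgHom.coe_toRingHom] at h
    rw [hfC] at h
    simp only [← Polynomial.aeval_def] at h
    simpa [Polynomial.aeval_X, Polynomial.aeval_C, ← hφ] using h
  ext i j
  set ωa : Fin n → AlgebraicClosure K := fun k => aeval (α j) (ω (n-1-(k:ℕ))) with hωa
  set Qj := aeval (α j) Q with hQj
  set v : Fin n → AlgebraicClosure K := fun i0 => ∑ k : Fin n, φ (B i0 k) * ωa k with hv
  set w : Fin n → AlgebraicClosure K := fun i0 =>
    φ a * ∑ q : Fin n, (∑ k : Fin n, (∑ p : Fin n, φ (U p i0) *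
      (if n ≤ (p:ℕ)+(k:ℕ)+1 then (-1 : AlgebraicClosure K)^((p:ℕ)+(k:ℕ)+1-n) *
        (Multiset.map α Finset.univ.val).esymm ((p:ℕ)+(k:ℕ)+1-n) else 0)) * φ (U k q)) *
      (ωa q * Qj) with hw
  have C1 : ∀ x : AlgebraicClosure K, x ≠ α j →
      (∑ i0 : Fin n, aeval x (ω (n-1-(i0:ℕ))) * v i0)
        = ∑ i0 : Fin n, aeval x (ω (n-1-(i0:ℕ))) * w i0 := by
    intro x hx
    have hxj : x - α j ≠ 0 := sub_ne_zero.mpr hx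
    apply mul_left_cancel₀ hxj
    have e1 : (x - α j) * ∑ i0 : Fin n, aeval x (ω (n-1-(i0:ℕ))) * v i0
        = aeval x P * Qj := by
      have h := hBez j x
      rw [hPα j, zero_mul, sub_zero] at h
      rw [hQj, h]
      congr 1
      refine Finset.sum_congr rfl fun i0 _ => ?_
      simp only [hv, hωa, Finset.mul_sum]
      exact Finset.sum_congr rfl fun k _ => by ring
    have hkey := key_id n α x (α j)
    rw [hProots j, sub_zero] at hkey
    have e2 : aeval x P * Qj = (x - α j) * (φ a * Qj *
        ∑ i0 : Fin n, ∑ k : Fin n,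
          (if n ≤ (i0:ℕ)+(k:ℕ)+1 then (-1 : AlgebraicClosure K)^((i0:ℕ)+(k:ℕ)+1-n) *
            (Multiset.map α Finset.univ.val).esymm ((i0:ℕ)+(k:ℕ)+1-n) else 0) *
          x^(n-1-(i0:ℕ)) * (α j)^(n-1-(k:ℕ))) := by
      rw [hPx x, hkey]; ring
    have e3 : φ a * Qj *
        (∑ i0 : Fin n, ∑ k : Fin n,
          (if n ≤ (i0:ℕ)+(k:ℕ)+1 then (-1 : AlgebraicClosure K)^((i0:ℕ)+(k:ℕ)+1-n) *
            (Multiset.map α Finset.univ.val).esymm ((i0:ℕ)+(k:ℕ)+1-n) else 0) *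
          x^(n-1-(i0:ℕ)) * (α j)^(n-1-(k:ℕ)))
        = ∑ p : Fin n, aeval x (ω (n-1-(p:ℕ))) * w p := by
      simp only [hUz, hw, hωa]
      simp only [Finset.mul_sum, Finset.sum_mul]
      rw [sum4_swap, Finset.sum_comm]
      refine Finset.sum_congr rfl fun p _ => Finset.sum_congr rfl fun q _ =>
        Finset.sum_congr rfl fun k _ => Finset.sum_congr rfl fun i0 _ => by ring
    rw [e1, e2, e3]
  have C2 : (∑ i0 : Fin n, (ω (n-1-(i0:ℕ))).map φ * Polynomial.C (v i0))
      = ∑ i0 : Fin n, (ω (n-1-(i0:ℕ))).map φ * Polynomial.C (w i0) := by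
    apply Polynomial.eq_of_infinite_eval_eq
    refine Set.Infinite.mono ?_ ((Set.finite_singleton (α j)).infinite_compl)
    intro x hx
    have hx' : x ≠ α j := hx
    show Polynomial.eval x _ = Polynomial.eval x _
    simp only [Polynomial.eval_finset_sum, Polynomial.eval_mul, Polynomial.eval_C,
      Polynomial.eval_map, hφ, ← Polynomial.aeval_def]
    exact C1 x hx'
  have hvw : ∀ i0 : Fin n, v i0 = w i0 := by
    have h0 : ∑ i0 : Fin n, (ω (n-1-(i0:ℕ))).map φ * Polynomial.C (v i0 - w i0) = 0 := by
      simp only [Polynomial.C_sub, mul_sub, Finset.sum_sub_distrib, C2, sub_self]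
    intro i0
    exact sub_eq_zero.mp (indep _ hωmon hωdeg _ h0 i0)
  have lhsEq : (B.map φ * Wmat n ω α) i j = v i := by
    simp only [Matrix.mul_apply, Matrix.map_apply, Wmat, Matrix.of_apply, hv, hωa]
  have rhsEq : (φ a • ((U.map φ)ᵀ *
          (Matrix.of fun i0 j0 : Fin n =>
            if n ≤ (i0 : ℕ) + (j0 : ℕ) + 1 then
              (-1 : AlgebraicClosure K) ^ ((i0 : ℕ) + (j0 : ℕ) + 1 - n) *
                (Multiset.map α Finset.univ.val).esymm ((i0 : ℕ) + (j0 : ℕ) + 1 - n)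
            else 0) *
          U.map φ *
          (Matrix.of fun i0 j0 : Fin n =>
            Polynomial.aeval (α j0) (ω (n - 1 - (i0 : ℕ))) *
              Polynomial.aeval (α j0) Q))) i j = w i := by
    simp only [Matrix.smul_apply, Matrix.mul_apply, Matrix.transpose_apply, Matrix.map_apply,
      Matrix.of_apply, smul_eq_mul, hw, hωa, hQj, Finset.sum_mul, Finset.mul_sum]
  rw [lhsEq, rhsEq]
  exact hvw i
end
end

section
/- Let ω = (ω_n, …, ω_1, ω_0) be a general basis of the polynomials of degree ≤ n over a field F, let 0 < k < n, and let M be any (n−k)×n matrix over F. Then detp_ω(M) = det([M; X_{ω,k}]) as an identity in F[x], where [M; X_{ω,k}] is the n×n matrix over F[x] obtained by stacking M on top of X_{ω,k}. -/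
open Polynomial Matrix BigOperators

noncomputable section

/-- The `k × n` matrix `X_{ω,k}`: rows `1,…,k` carry `−I_k` in (1-based) columns
`n−k, …, n−1`, and the last column of row `i` is `ω_{k+1−i}`. -/
def Xmat {K : Type*} [Field K] (n k : ℕ) (ω : ℕ → Polynomial K) :
    Matrix (Fin k) (Fin n) (Polynomial K) :=
  Matrix.of fun i j =>
    if (j : ℕ) = n - k - 1 + (i : ℕ) then -1
    else if (j : ℕ) = n - 1 then ω (k - (i : ℕ))
    else 0

/-- Stacking an `(n−k) × n` scalar matrix on top of a `k × n` polynomial matrix. -/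
def stackMat {K : Type*} [Field K] {n k : ℕ}
    (M : Matrix (Fin (n - k)) (Fin n) K) (Y : Matrix (Fin k) (Fin n) (Polynomial K)) :
    Matrix (Fin n) (Fin n) (Polynomial K) :=
  Matrix.of fun i j =>
    if h : (i : ℕ) < n - k then Polynomial.C (M ⟨(i : ℕ), h⟩ j)
    else Y ⟨(i : ℕ) - (n - k), by have := i.isLt; omega⟩ j

/-- The determinental polynomial of an `(n−k) × n` matrix `M` associated with `ω`:
`detp_ω M = Σ_{i=0}^k det(M̂_i) · ω_i` where `M̂_i` consists of the first `n−k−1`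
columns of `M` together with its (1-based) `(n−i)`-th column. -/
def detp {K : Type*} [Field K] {n k : ℕ} (hkn : k < n) (ω : ℕ → Polynomial K)
    (M : Matrix (Fin (n - k)) (Fin n) K) : Polynomial K :=
  ∑ i ∈ Finset.range (k + 1),
    Polynomial.C (Matrix.det (Matrix.of fun r c : Fin (n - k) =>
      if (c : ℕ) < n - k - 1 then M r ⟨(c : ℕ), by have := c.isLt; omega⟩
      else M r ⟨n - 1 - i, by omega⟩)) * ω i

/-!
Permuting the columns of `[M; X_{ω,k}]` by the cycle that moves the last column to position
`n - k - 1` turns the lower right `k × k` block into `-1`, so the determinant is given by a Schur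
complement `A + B C`; the sign `(-1)^k` of the cycle cancels `det (-1)`. Only column `n - k - 1`
of `A + B C` differs from `M̂_0`, and it is `∑ t, ω t • (column n - 1 - t of M)` because `ω 0 = 1`.
Expanding the determinant linearly in that column gives `detp_ω M`.
-/

namespace Matrix

variable {R : Type*} [CommRing R] {m p : Type*} [Fintype m] [DecidableEq m] [Fintype p]
  [DecidableEq p]

theorem det_updateCol_finset_sum {ι : Type*} (A : Matrix m m R) (j : m) (s : Finset ι)
    (c : ι → R) (v : ι → m → R) :
    (A.updateCol j (∑ i ∈ s, c i • v i)).det = ∑ i ∈ s, c i * (A.updateCol j (v i)).det := by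
  classical
  induction s using Finset.induction_on with
  | empty => simpa using det_eq_zero_of_column_eq_zero j fun i => by simp
  | insert a s ha ih =>
    rw [Finset.sum_insert ha, det_updateCol_add, det_updateCol_smul, ih, Finset.sum_insert ha]

theorem det_fromBlocks_neg_one₂₂ (A : Matrix m m R) (B : Matrix m p R) (C : Matrix p m R) :
    (fromBlocks A B C (-1)).det = (-1) ^ Fintype.card p * (A + B * C).det := by
  have : Invertible (1 : Matrix p p R) := invertibleOne
  have := invertibleNeg (1 : Matrix p p R)
  rw [det_fromBlocks₂₂, invOf_neg, invOf_one, det_neg, det_one, mul_one, Matrix.mul_neg,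
    Matrix.mul_one, Matrix.neg_mul, sub_neg_eq_add]

theorem det_submatrix_equiv_perm {ι : Type*} [Fintype ι] [DecidableEq ι] (A : Matrix m m R)
    (e : ι ≃ m) (σ : Equiv.Perm m) :
    (A.submatrix e (σ ∘ e)).det = Equiv.Perm.sign σ * A.det := by
  rw [← det_permute', ← det_submatrix_equiv_self e, submatrix_submatrix]
  rfl

end Matrix

theorem Fin.sum_univ_sub_eq_sum_range {M : Type*} [AddCommMonoid M] (k : ℕ) (f : ℕ → M) :
    ∑ i : Fin k, f (k - i) = ∑ t ∈ Finset.range k, f (t + 1) := by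
  rw [Fin.sum_univ_eq_sum_range (fun i => f (k - i)), ← Finset.sum_range_reflect]
  refine Finset.sum_congr rfl fun t ht => congrArg f ?_
  rw [Finset.mem_range] at ht
  omega

section DetpMinor

variable {K : Type*} {n k : ℕ}

def detpMinor (hkn : k < n) (M : Matrix (Fin (n - k)) (Fin n) K) (t : ℕ) :
    Matrix (Fin (n - k)) (Fin (n - k)) K :=
  of fun r c => if (c : ℕ) < n - k - 1 then M r ⟨c, by omega⟩ else M r ⟨n - 1 - t, by omega⟩

theorem detp_eq_sum_detpMinor [Field K] (hkn : k < n) (ω : ℕ → K[X])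
    (M : Matrix (Fin (n - k)) (Fin n) K) :
    detp hkn ω M = ∑ t ∈ Finset.range (k + 1), C (detpMinor hkn M t).det * ω t :=
  rfl

theorem updateCol_map_detpMinor_zero [CommRing K] (hkn : k < n)
    (M : Matrix (Fin (n - k)) (Fin n) K) (t : ℕ) :
    ((detpMinor hkn M 0).map C).updateCol ⟨n - k - 1, by omega⟩
        (fun r => C (M r ⟨n - 1 - t, by omega⟩)) =
      (detpMinor hkn M t).map C := by
  refine Matrix.ext fun r c => ?_
  by_cases hc : (c : ℕ) = n - k - 1
  · rw [show c = ⟨n - k - 1, by omega⟩ from Fin.ext hc, updateCol_self]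
    simp [detpMinor]
  · rw [updateCol_ne fun h => hc (by rw [h])]
    simp [detpMinor, show (c : ℕ) < n - k - 1 by omega]

end DetpMinor

section StackedMatrix

variable {K : Type*} [Field K] {n k : ℕ}

variable (n k) in
def stackBlockEquiv (hkn : k < n) : Fin (n - k) ⊕ Fin k ≃ Fin n :=
  finSumFinEquiv.trans (finCongr (by omega))

@[simp] theorem val_stackBlockEquiv_inl (hkn : k < n) (r : Fin (n - k)) :
    (stackBlockEquiv n k hkn (.inl r) : ℕ) = r := rfl

@[simp] theorem val_stackBlockEquiv_inr (hkn : k < n) (i : Fin k) :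
    (stackBlockEquiv n k hkn (.inr i) : ℕ) = n - k + i := rfl

variable (n k) in
def stackColPerm (hkn : k < n) : Equiv.Perm (Fin n) :=
  (Fin.cycleIcc ⟨n - k - 1, by omega⟩ ⟨n - 1, by omega⟩).symm

theorem sign_stackColPerm (hkn : k < n) :
    Equiv.Perm.sign (stackColPerm n k hkn) = (-1) ^ k := by
  rw [stackColPerm, Equiv.Perm.sign_symm, Fin.sign_cycleIcc_of_le (by simp; omega)]
  congr 1
  simp
  omega

theorem val_stackColPerm_inl (hkn : k < n) (c : Fin (n - k)) :
    (stackColPerm n k hkn (stackBlockEquiv n k hkn (.inl c)) : ℕ) =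
      if (c : ℕ) < n - k - 1 then (c : ℕ) else n - 1 := by
  have : NeZero n := ⟨by omega⟩
  have hc := c.isLt
  split_ifs with h
  · rw [stackColPerm,
      (Equiv.symm_apply_eq _).2 (Fin.cycleIcc_of_lt (Fin.lt_def.2 (by simpa))).symm]
    rfl
  · have hlast : stackBlockEquiv n k hkn (.inl c) = ⟨n - k - 1, by omega⟩ :=
      Fin.ext (by simp; omega)
    rw [hlast, stackColPerm,
      (Equiv.symm_apply_eq _).2 (Fin.cycleIcc_of_last (Fin.le_def.2 (by simp; omega))).symm]

theorem val_stackColPerm_inr (hkn : k < n) (i : Fin k) :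
    (stackColPerm n k hkn (stackBlockEquiv n k hkn (.inr i)) : ℕ) = n - k - 1 + i := by
  have : NeZero n := ⟨by omega⟩
  have hi := i.isLt
  have hcycle : Fin.cycleIcc (⟨n - k - 1, by omega⟩ : Fin n) ⟨n - 1, by omega⟩
      ⟨n - k - 1 + i, by omega⟩ = stackBlockEquiv n k hkn (.inr i) := by
    rw [Fin.cycleIcc_of_ge_of_lt (Fin.le_def.2 (by simp)) (Fin.lt_def.2 (by simp; omega))]
    ext
    rw [Fin.val_add_one_of_lt' (by simp; omega)]
    simp
    omega
  rw [stackColPerm, (Equiv.symm_apply_eq _).2 hcycle.symm]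

def stackTopRight (hkn : k < n) (M : Matrix (Fin (n - k)) (Fin n) K) :
    Matrix (Fin (n - k)) (Fin k) K[X] :=
  of fun r i => C (M r ⟨n - k - 1 + i, by omega⟩)

variable (n k) in
def stackBottomLeft (ω : ℕ → K[X]) : Matrix (Fin k) (Fin (n - k)) K[X] :=
  of fun i c => if (c : ℕ) = n - k - 1 then ω (k - i) else 0

theorem stackMat_submatrix_eq_fromBlocks (hkn : k < n) (ω : ℕ → K[X])
    (M : Matrix (Fin (n - k)) (Fin n) K) :
    (stackMat M (Xmat n k ω)).submatrix (stackBlockEquiv n k hkn)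
        (stackColPerm n k hkn ∘ stackBlockEquiv n k hkn) =
      fromBlocks ((detpMinor hkn M 0).map C) (stackTopRight hkn M) (stackBottomLeft n k ω)
        (-1) := by
  refine Matrix.ext fun p q => ?_
  rcases p with r | i <;> rcases q with c | i'
  · have hc := c.isLt
    simp only [submatrix_apply, Function.comp_apply, stackMat, of_apply, fromBlocks_apply₁₁,
      map_apply, detpMinor, val_stackBlockEquiv_inl, r.isLt, ↓reduceDIte, Fin.eta]
    refine congrArg C ?_
    split_ifs with h <;> refine congrArg (M r) (Fin.ext ?_) <;> simp [val_stackColPerm_inl, h]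
  · simp only [submatrix_apply, Function.comp_apply, stackMat, of_apply, fromBlocks_apply₁₂,
      stackTopRight, val_stackBlockEquiv_inl, r.isLt, ↓reduceDIte, Fin.eta]
    exact congrArg (C ∘ M r) (Fin.ext (val_stackColPerm_inr hkn i'))
  · have hc := c.isLt
    have hi := i.isLt
    simp only [submatrix_apply, Function.comp_apply, stackMat, of_apply, fromBlocks_apply₂₁,
      stackBottomLeft, val_stackBlockEquiv_inr, Xmat, val_stackColPerm_inl,
      Nat.add_sub_cancel_left]
    rw [dif_neg (by omega)]
    split_ifs <;> first | rfl | omega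
  · have hi := i.isLt
    simp only [submatrix_apply, Function.comp_apply, stackMat, of_apply, fromBlocks_apply₂₂,
      val_stackBlockEquiv_inr, Xmat, val_stackColPerm_inr, Nat.add_sub_cancel_left]
    rw [dif_neg (by omega), neg_apply, one_apply]
    split_ifs <;> simp_all [Fin.ext_iff]
    omega

theorem map_detpMinor_zero_add_mul_eq_updateCol (hkn : k < n) (ω : ℕ → K[X]) (hω0 : ω 0 = 1)
    (M : Matrix (Fin (n - k)) (Fin n) K) :
    (detpMinor hkn M 0).map C + stackTopRight hkn M * stackBottomLeft n k ω =
      ((detpMinor hkn M 0).map C).updateCol ⟨n - k - 1, by omega⟩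
        (∑ t ∈ Finset.range (k + 1), ω t • fun r => C (M r ⟨n - 1 - t, by omega⟩)) := by
  refine Matrix.ext fun r c => ?_
  by_cases hc : (c : ℕ) = n - k - 1
  · rw [show c = ⟨n - k - 1, by omega⟩ from Fin.ext hc, updateCol_self]
    simp only [detpMinor, stackTopRight, stackBottomLeft, tsub_zero, Matrix.add_apply, map_apply,
      of_apply, lt_self_iff_false, ↓reduceIte, mul_apply, Finset.sum_apply, Pi.smul_apply,
      smul_eq_mul]
    rw [Finset.sum_range_succ', hω0, one_mul, add_comm,
      ← Fin.sum_univ_sub_eq_sum_range k fun t => ω t * C (M r ⟨n - 1 - t, by omega⟩)]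
    refine congrArg (· + _) (Finset.sum_congr rfl fun i _ => ?_)
    have hi := i.isLt
    rw [mul_comm]
    congr 3
    rw [Fin.mk.injEq]
    omega
  · rw [updateCol_ne fun h => hc (by rw [h])]
    simp [stackBottomLeft, mul_apply, hc]

theorem det_map_detpMinor_zero_add_mul (hkn : k < n) (ω : ℕ → K[X]) (hω0 : ω 0 = 1)
    (M : Matrix (Fin (n - k)) (Fin n) K) :
    ((detpMinor hkn M 0).map C + stackTopRight hkn M * stackBottomLeft n k ω).det =
      detp hkn ω M := by
  rw [map_detpMinor_zero_add_mul_eq_updateCol hkn ω hω0, det_updateCol_finset_sum,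
    detp_eq_sum_detpMinor]
  refine Finset.sum_congr rfl fun t _ => ?_
  rw [updateCol_map_detpMinor_zero, ← RingHom.mapMatrix_apply, ← RingHom.map_det, mul_comm]

end StackedMatrix

theorem detp_eq_stack_det_general
    {K : Type*} [Field K] (n k : ℕ) (hkn : k < n)
    (ω : ℕ → Polynomial K) (hω : IsGeneralBasis n ω)
    (M : Matrix (Fin (n - k)) (Fin n) K) :
    detp hkn ω M = (stackMat M (Xmat n k ω)).det := by
  have hω0 : ω 0 = 1 := (hω 0 n.zero_le).1.natDegree_eq_zero.1 (hω 0 n.zero_le).2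
  have hperm := det_submatrix_equiv_perm (stackMat M (Xmat n k ω)) (stackBlockEquiv n k hkn)
    (stackColPerm n k hkn)
  rw [stackMat_submatrix_eq_fromBlocks, det_fromBlocks_neg_one₂₂, Fintype.card_fin,
    det_map_detpMinor_zero_add_mul hkn ω hω0, sign_stackColPerm] at hperm
  push_cast at hperm
  exact mul_left_cancel₀ (pow_ne_zero k (neg_ne_zero.2 one_ne_zero)) hperm

/-- for any `(n−k) × n` matrix `M` over `F`,
`detp_ω M = det [M; X_{ω,k}]` in `F[x]`. -/
theorem detp_eq_stack_det
    {K : Type*} [Field K] (n k : ℕ) (hk0 : 0 < k) (hkn : k < n)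
    (ω : ℕ → Polynomial K) (hω : IsGeneralBasis n ω)
    (M : Matrix (Fin (n - k)) (Fin n) K) :
    detp hkn ω M = (stackMat M (Xmat n k ω)).det :=
  detp_eq_stack_det_general n k hkn ω hω M
end
end

section
/- Let R be a commutative ring, let n > k > 0, let U be an n×n upper triangular matrix over R, and let T be an n×n matrix over R with T_{ij} = 0 whenever i + j ≤ n. Then the matrix consisting of the first n−k rows of U^T T U has all entries zero in its first k columns, and its remaining (n−k)×(n−k) block equals U_1^T · T_1 · C, where U_1 is the leading principal (n−k)×(n−k) submatrix of U, T_1 is the (n−k)×(n−k) submatrix of T formed by its first n−k rows and its last n−k columns, and C is the trailing principal (n−k)×(n−k) submatrix of U (rows and columns k+1, …, n). -/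
open Polynomial Matrix BigOperators

noncomputable section



private lemma sum_low {M : Type*} [AddCommMonoid M] {n m : ℕ} (h : m ≤ n) (g : Fin n → M)
    (hg : ∀ a : Fin n, m ≤ (a : ℕ) → g a = 0) :
    ∑ a, g a = ∑ a : Fin m, g (Fin.castLE h a) := by
  classical
  have hsub := Finset.sum_subset
    (Finset.subset_univ ((Finset.univ : Finset (Fin m)).map (Fin.castLEEmb h)))
    (f := g) (fun x _ hx => hg x (by
      by_contra hlt
      push_neg at hlt
      exact hx (Finset.mem_map.mpr ⟨⟨(x : ℕ), hlt⟩, Finset.mem_univ _, Fin.ext rfl⟩)))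
  rw [← hsub, Finset.sum_map]
  rfl

private lemma sum_shift {M : Type*} [AddCommMonoid M] {n k : ℕ} (h : k ≤ n) (g : Fin n → M)
    (hg : ∀ a : Fin n, (a : ℕ) < k → g a = 0) :
    ∑ a, g a = ∑ b : Fin (n - k), g ⟨k + (b : ℕ), by omega⟩ := by
  classical
  have hemb : Function.Injective (fun b : Fin (n - k) => (⟨k + (b : ℕ), by omega⟩ : Fin n)) := by
    intro a b hab
    simpa [Fin.ext_iff] using hab
  have hsub := Finset.sum_subset
    (Finset.subset_univ ((Finset.univ : Finset (Fin (n - k))).map ⟨_, hemb⟩))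
    (f := g) (fun x _ hx => hg x (by
      by_contra hge
      push_neg at hge
      exact hx (Finset.mem_map.mpr ⟨⟨(x : ℕ) - k, by omega⟩, Finset.mem_univ _,
        Fin.ext (by simp; omega)⟩)))
  rw [← hsub, Finset.sum_map]
  rfl

/-- if `U` is upper triangular and `T` vanishes strictly above the
antidiagonal, then the first `n−k` rows of `UᵀTU` vanish in the first `k` columns,
and the remaining `(n−k) × (n−k)` block is `U₁ᵀ · T₁ · C`, with `U₁` the leading
principal block of `U`, `T₁` the top-right block of `T`, and `C` the trailing
principal block of `U`. -/
theorem upper_part_block_structure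
    {R : Type*} [CommRing R] (n k : ℕ) (hk0 : 0 < k) (hkn : k < n)
    (U T : Matrix (Fin n) (Fin n) R)
    (hU : ∀ i j : Fin n, (j : ℕ) < (i : ℕ) → U i j = 0)
    (hT : ∀ i j : Fin n, (i : ℕ) + (j : ℕ) + 2 ≤ n → T i j = 0) :
    (∀ i c : Fin n, (i : ℕ) < n - k → (c : ℕ) < k → (Uᵀ * T * U) i c = 0) ∧
    (∀ r c : Fin (n - k),
      (Uᵀ * T * U) ⟨(r : ℕ), by have := r.isLt; omega⟩
          ⟨k + (c : ℕ), by have := c.isLt; omega⟩ =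
        ((Matrix.of fun a b : Fin (n - k) =>
            U ⟨(a : ℕ), by have := a.isLt; omega⟩ ⟨(b : ℕ), by have := b.isLt; omega⟩)ᵀ *
         (Matrix.of fun a b : Fin (n - k) =>
            T ⟨(a : ℕ), by have := a.isLt; omega⟩ ⟨k + (b : ℕ), by have := b.isLt; omega⟩) *
         (Matrix.of fun a b : Fin (n - k) =>
            U ⟨k + (a : ℕ), by have := a.isLt; omega⟩
              ⟨k + (b : ℕ), by have := b.isLt; omega⟩)) r c) := by
  constructor
  · intro i c hi hc
    rw [mul_apply]
    apply Finset.sum_eq_zero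
    intro b _
    by_cases hbc : (c : ℕ) < (b : ℕ)
    · rw [hU b c hbc, mul_zero]
    · push_neg at hbc
      have hz : (Uᵀ * T) i b = 0 := by
        rw [mul_apply]
        apply Finset.sum_eq_zero
        intro a _
        by_cases hai : (i : ℕ) < (a : ℕ)
        · rw [transpose_apply, hU a i hai, zero_mul]
        · push_neg at hai
          rw [hT a b (by omega), mul_zero]
      rw [hz, zero_mul]
  · intro r c
    simp only [mul_apply, transpose_apply, of_apply, Finset.sum_mul]
    rw [sum_shift (le_of_lt hkn)
      (fun j => ∑ a : Fin n, U a ⟨(r : ℕ), by omega⟩ * T a j * U j ⟨k + (c : ℕ), by omega⟩)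
      (fun j hj => Finset.sum_eq_zero fun a _ => by
        by_cases hai : (r : ℕ) < (a : ℕ)
        · rw [hU a ⟨(r : ℕ), by omega⟩ hai, zero_mul, zero_mul]
        · push_neg at hai
          have := r.isLt
          rw [hT a j (by omega), mul_zero, zero_mul])]
    refine Finset.sum_congr rfl fun b _ => ?_
    rw [sum_low (by omega : n - k ≤ n)
      (fun a => U a ⟨(r : ℕ), by omega⟩ * T a ⟨k + (b : ℕ), by omega⟩ *
        U ⟨k + (b : ℕ), by omega⟩ ⟨k + (c : ℕ), by omega⟩)
      (fun a ha => by
        beta_reduce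
        rw [hU a ⟨(r : ℕ), by omega⟩ (show (r : ℕ) < (a : ℕ) by have := r.isLt; omega),
          zero_mul, zero_mul])]
    rfl
end
end
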